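/- arXiv:2210.01300 — 3 statements merged into one kernel-verified Lean document; each statement's English description precedes it below -/
import Mathlib

section
/- Let x_1,...,x_N and δ_1,...,δ_N be real numbers and set x̂_i = x_i + δ_i. Fix ε > 0 and η₁, η₂ ≥ 0. If the sample cross term satisfies |(1/N)·Σ_{i=1}^N x_i·δ_i| ≤ η₁ and the sample second-moment gap satisfies |(1/N)·Σ_{i=1}^N x̂_i² − (1/N)·Σ_{i=1}^N x_i²| ≤ η₂, then the sample proportion of large deviations is bounded: (1/N)·Σ_{i=1}^N 1{|δ_i| > ε} ≤ (η₂ + 2η₁)/ε². -/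
theorem large_deviation_proportion_bound
    (N : ℕ) (hN : 1 ≤ N) (x δ : Fin N → ℝ) (xhat : Fin N → ℝ)
    (hxhat : ∀ i, xhat i = x i + δ i)
    (ε η₁ η₂ : ℝ) (hε : 0 < ε) (hη₁ : 0 ≤ η₁) (hη₂ : 0 ≤ η₂)
    (hcross : |(1 / (N : ℝ)) * ∑ i, x i * δ i| ≤ η₁)
    (hgap : |(1 / (N : ℝ)) * ∑ i, (xhat i) ^ 2 - (1 / (N : ℝ)) * ∑ i, (x i) ^ 2| ≤ η₂) :
    (1 / (N : ℝ)) * ∑ i, (if |δ i| > ε then (1 : ℝ) else 0) ≤ (η₂ + 2 * η₁) / ε ^ 2 := by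
  have hNpos : (0:ℝ) < N := by exact_mod_cast hN
  have hexp : ∑ i, (xhat i)^2 = ∑ i, (x i)^2 + 2 * ∑ i, x i * δ i + ∑ i, (δ i)^2 := by
    simp only [hxhat, Finset.mul_sum, ← Finset.sum_add_distrib]
    exact Finset.sum_congr rfl fun i _ => by ring
  have hsum : (1/(N:ℝ)) * ∑ i, (δ i)^2 ≤ η₂ + 2*η₁ := by
    have h1 := abs_le.mp hcross
    have h2 := abs_le.mp hgap
    have : (1/(N:ℝ)) * ∑ i, (δ i)^2
        = ((1/(N:ℝ)) * ∑ i, (xhat i)^2 - (1/(N:ℝ)) * ∑ i, (x i)^2)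
          - 2 * ((1/(N:ℝ)) * ∑ i, x i * δ i) := by
      rw [hexp]; ring
    linarith [h1.1, h1.2, h2.1, h2.2]
  have hpt : ∑ i, (if |δ i| > ε then (1:ℝ) else 0) * ε^2 ≤ ∑ i, (δ i)^2 := by
    apply Finset.sum_le_sum
    intro i _
    by_cases h : |δ i| > ε
    · simp only [h, if_pos, one_mul]
      nlinarith [sq_abs (δ i), h, hε]
    · simp only [h, if_neg, not_false_iff, zero_mul]
      positivity
  rw [← Finset.sum_mul] at hpt
  rw [le_div_iff₀ (by positivity)]
  have hNinv : (0:ℝ) ≤ 1/(N:ℝ) := by positivity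
  nlinarith [mul_le_mul_of_nonneg_left hpt hNinv]
end

section
/- Let (Ω, ℱ, ℙ) be a probability space and, for each N ≥ 1, let X^{(N)}_1,...,X^{(N)}_N and δ^{(N)}_1,...,δ^{(N)}_N be real-valued random variables on Ω, and set X̂^{(N)}_i = X^{(N)}_i + δ^{(N)}_i. Suppose the random sequences A_N := (1/N)·Σ_{i=1}^N X^{(N)}_i·δ^{(N)}_i and B_N := (1/N)·Σ_{i=1}^N (X̂^{(N)}_i)² − (1/N)·Σ_{i=1}^N (X^{(N)}_i)² both converge to 0 in probability as N → ∞. Then for every ε > 0, the sample proportion of large deviations P_N := (1/N)·Σ_{i=1}^N 1{|δ^{(N)}_i| > ε} converges to 0 in probability as N → ∞. -/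
open MeasureTheory Filter Finset

/-!
Write `A`, `S` and `P` for the sample means of `X δ`, `δ²` and `1{|δ| > ε}`. Expanding the square,
the difference of second moments is `2 A + S`, and Chebyshev's inequality for the empirical
measure gives `ε² P ≤ S`. So `P > ρ` forces `|2 A + S| > ρ ε² / 2` or `|A| > ρ ε² / 4`, and both
events have vanishing probability.
-/

theorem tendsto_measure_of_subset_union {Ω : Type*} [MeasurableSpace Ω] {μ : Measure Ω}
    {s t u : ℕ → Set Ω} (hs : ∀ N, s N ⊆ t N ∪ u N)
    (ht : Tendsto (fun N => μ (t N)) atTop (nhds 0))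
    (hu : Tendsto (fun N => μ (u N)) atTop (nhds 0)) :
    Tendsto (fun N => μ (s N)) atTop (nhds 0) := by
  have hsum : Tendsto (fun N => μ (t N) + μ (u N)) atTop (nhds 0) := by
    simpa using ht.add hu
  exact tendsto_of_tendsto_of_tendsto_of_le_of_le tendsto_const_nhds hsum
    (fun _ => zero_le) fun N => (measure_mono (hs N)).trans (measure_union_le _ _)

section SampleMoments

variable {ι : Type*} (s : Finset ι) (c : ℝ) (x d : ι → ℝ)

theorem mul_sum_add_sq_sub_mul_sum_sq :
    c * ∑ i ∈ s, (x i + d i) ^ 2 - c * ∑ i ∈ s, x i ^ 2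
      = 2 * (c * ∑ i ∈ s, x i * d i) + c * ∑ i ∈ s, d i ^ 2 := by
  have hsum : ∑ i ∈ s, ((x i + d i) ^ 2 - x i ^ 2)
      = 2 * ∑ i ∈ s, x i * d i + ∑ i ∈ s, d i ^ 2 := by
    rw [mul_sum, ← sum_add_distrib]
    exact sum_congr rfl fun i _ => by ring
  rw [← mul_sub, ← sum_sub_distrib, hsum]
  ring

theorem sq_mul_sum_ite_lt_abs_le_sum_sq (ε : ℝ) (hε : 0 ≤ ε) :
    ε ^ 2 * ∑ i ∈ s, (if ε < |d i| then (1 : ℝ) else 0) ≤ ∑ i ∈ s, d i ^ 2 := by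
  rw [mul_sum]
  refine sum_le_sum fun i _ => ?_
  split_ifs with h
  · simpa [sq_abs] using pow_le_pow_left₀ hε h.le 2
  · simpa using sq_nonneg (d i)

theorem lt_abs_mul_sum_add_sq_sub_or_lt_abs_mul_sum_mul {ε ρ : ℝ} (hε : 0 < ε) (hc : 0 ≤ c)
    (hP : ρ < |c * ∑ i ∈ s, (if ε < |d i| then (1 : ℝ) else 0)|) :
    ρ * ε ^ 2 / 2 < |c * ∑ i ∈ s, (x i + d i) ^ 2 - c * ∑ i ∈ s, x i ^ 2|
      ∨ ρ * ε ^ 2 / 4 < |c * ∑ i ∈ s, x i * d i| := by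
  have hP_nonneg : 0 ≤ c * ∑ i ∈ s, (if ε < |d i| then (1 : ℝ) else 0) :=
    mul_nonneg hc (sum_nonneg fun i _ => by split_ifs <;> norm_num)
  rw [abs_of_nonneg hP_nonneg] at hP
  have hS : ρ * ε ^ 2 < c * ∑ i ∈ s, d i ^ 2 := by
    have := mul_le_mul_of_nonneg_left (sq_mul_sum_ite_lt_abs_le_sum_sq s d ε hε.le) hc
    nlinarith [sq_pos_of_pos hε]
  rw [mul_sum_add_sq_sub_mul_sum_sq]
  by_contra! h
  linarith [le_abs_self (2 * (c * ∑ i ∈ s, x i * d i) + c * ∑ i ∈ s, d i ^ 2),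
    neg_abs_le (c * ∑ i ∈ s, x i * d i), h.1, h.2]

end SampleMoments

theorem consistency_in_probability_general
    {Ω : Type*} [MeasurableSpace Ω] (ℙ : Measure Ω)
    (X δ : (N : ℕ) → ℕ → Ω → ℝ)
    (Xhat : (N : ℕ) → ℕ → Ω → ℝ)
    (hXhat : ∀ N i ω, Xhat N i ω = X N i ω + δ N i ω)
    (hA : ∀ ρ > (0 : ℝ),
      Tendsto (fun N : ℕ =>
        ℙ {ω | |(1 / (N : ℝ)) * ∑ i ∈ Finset.range N, X N i ω * δ N i ω| > ρ})
        atTop (nhds 0))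
    (hB : ∀ ρ > (0 : ℝ),
      Tendsto (fun N : ℕ =>
        ℙ {ω | |(1 / (N : ℝ)) * ∑ i ∈ Finset.range N, (Xhat N i ω) ^ 2 -
                (1 / (N : ℝ)) * ∑ i ∈ Finset.range N, (X N i ω) ^ 2| > ρ})
        atTop (nhds 0)) :
    ∀ ε > (0 : ℝ), ∀ ρ > (0 : ℝ),
      Tendsto (fun N : ℕ =>
        ℙ {ω | |(1 / (N : ℝ)) * ∑ i ∈ Finset.range N,
                  (if |δ N i ω| > ε then (1 : ℝ) else 0)| > ρ})
        atTop (nhds 0) := by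
  intro ε hε ρ hρ
  simp only [hXhat] at hB
  exact tendsto_measure_of_subset_union
    (fun N ω hω => lt_abs_mul_sum_add_sq_sub_or_lt_abs_mul_sum_mul (range N) _
      (X N · ω) (δ N · ω) hε (by positivity) hω)
    (hB _ (by positivity)) (hA _ (by positivity))

theorem consistency_in_probability
    {Ω : Type*} [MeasurableSpace Ω] (ℙ : Measure Ω) [IsProbabilityMeasure ℙ]
    (X δ : (N : ℕ) → ℕ → Ω → ℝ)
    (hXmeas : ∀ N i, Measurable (X N i)) (hδmeas : ∀ N i, Measurable (δ N i))
    (Xhat : (N : ℕ) → ℕ → Ω → ℝ)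
    (hXhat : ∀ N i ω, Xhat N i ω = X N i ω + δ N i ω)
    (hA : ∀ ρ > (0 : ℝ),
      Tendsto (fun N : ℕ =>
        ℙ {ω | |(1 / (N : ℝ)) * ∑ i ∈ Finset.range N, X N i ω * δ N i ω| > ρ})
        atTop (nhds 0))
    (hB : ∀ ρ > (0 : ℝ),
      Tendsto (fun N : ℕ =>
        ℙ {ω | |(1 / (N : ℝ)) * ∑ i ∈ Finset.range N, (Xhat N i ω) ^ 2 -
                (1 / (N : ℝ)) * ∑ i ∈ Finset.range N, (X N i ω) ^ 2| > ρ})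
        atTop (nhds 0)) :
    ∀ ε > (0 : ℝ), ∀ ρ > (0 : ℝ),
      Tendsto (fun N : ℕ =>
        ℙ {ω | |(1 / (N : ℝ)) * ∑ i ∈ Finset.range N,
                  (if |δ N i ω| > ε then (1 : ℝ) else 0)| > ρ})
        atTop (nhds 0) :=
  consistency_in_probability_general ℙ X δ Xhat hXhat hA hB
end

section
/- Let x_1,...,x_N and δ_1,...,δ_N be real numbers, let c ≠ −1/2 be a real constant, ε > 0, and η₁, η₂ ≥ 0. If |(1/N)·Σ_{i=1}^N x_i·δ_i − c·(1/N)·Σ_{i=1}^N δ_i²| ≤ η₁ and |(1/N)·Σ_{i=1}^N (x_i + δ_i)² − (1/N)·Σ_{i=1}^N x_i²| ≤ η₂, then the sample proportion of large deviations satisfies (1/N)·Σ_{i=1}^N 1{|δ_i| > ε} ≤ (η₂ + 2η₁)/(|1 + 2c|·ε²). -/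
theorem large_deviation_proportion_bound_general
    (N : ℕ) (hN : 1 ≤ N) (x δ : Fin N → ℝ) (c : ℝ) (hc : c ≠ -(1 / 2))
    (ε η₁ η₂ : ℝ) (hε : 0 < ε) (hη₁ : 0 ≤ η₁) (hη₂ : 0 ≤ η₂)
    (hcross : |(1 / (N : ℝ)) * ∑ i, x i * δ i -
      c * ((1 / (N : ℝ)) * ∑ i, (δ i) ^ 2)| ≤ η₁)
    (hgap : |(1 / (N : ℝ)) * ∑ i, (x i + δ i) ^ 2 -
      (1 / (N : ℝ)) * ∑ i, (x i) ^ 2| ≤ η₂) :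
    (1 / (N : ℝ)) * ∑ i, (if |δ i| > ε then (1 : ℝ) else 0) ≤
      (η₂ + 2 * η₁) / (|1 + 2 * c| * ε ^ 2) := by
  set S : ℝ := (1 / (N : ℝ)) * ∑ i, (δ i) ^ 2 with hS
  have hNpos : (0 : ℝ) < N := by exact_mod_cast hN
  have hSnonneg : 0 ≤ S := by
    apply mul_nonneg (by positivity)
    exact Finset.sum_nonneg fun i _ => sq_nonneg _
  have hcpos : 0 < |1 + 2 * c| := by
    rw [abs_pos]
    intro h
    apply hc
    linarith
  -- key identity
  have hkey : (1 + 2 * c) * S =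
      ((1 / (N : ℝ)) * ∑ i, (x i + δ i) ^ 2 - (1 / (N : ℝ)) * ∑ i, (x i) ^ 2)
      - 2 * ((1 / (N : ℝ)) * ∑ i, x i * δ i - c * S) := by
    have h1 : ∑ i, (x i + δ i) ^ 2 = ∑ i, (x i) ^ 2 + 2 * ∑ i, x i * δ i + ∑ i, (δ i) ^ 2 := by
      rw [Finset.mul_sum, ← Finset.sum_add_distrib, ← Finset.sum_add_distrib]
      exact Finset.sum_congr rfl fun i _ => by ring
    rw [hS, h1]
    ring
  have habs : |1 + 2 * c| * S ≤ η₂ + 2 * η₁ := by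
    have : |(1 + 2 * c) * S| ≤ η₂ + 2 * η₁ := by
      rw [hkey]
      calc |_ - 2 * _| ≤ |(1 / (N : ℝ)) * ∑ i, (x i + δ i) ^ 2 - (1 / (N : ℝ)) * ∑ i, (x i) ^ 2|
            + |2 * ((1 / (N : ℝ)) * ∑ i, x i * δ i - c * S)| := abs_sub _ _
        _ ≤ η₂ + 2 * η₁ := by
            rw [abs_mul, abs_two]
            exact add_le_add hgap (by linarith)
    rwa [abs_mul, abs_of_nonneg hSnonneg] at this
  -- indicator bound
  have hsum : ∑ i, (if |δ i| > ε then (1:ℝ) else 0) ≤ (∑ i, (δ i) ^ 2) / ε ^ 2 := by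
    rw [Finset.sum_div]
    apply Finset.sum_le_sum
    intro i _
    by_cases h : |δ i| > ε
    · simp only [h, if_true]
      rw [le_div_iff₀ (by positivity), one_mul]
      calc ε ^ 2 ≤ |δ i| ^ 2 := by
            apply pow_le_pow_left₀ hε.le h.le
        _ = (δ i) ^ 2 := sq_abs _
    · simp only [h, if_false]
      positivity
  have hind : (1 / (N : ℝ)) * ∑ i, (if |δ i| > ε then (1 : ℝ) else 0) ≤ S / ε ^ 2 := by
    rw [hS, mul_div_assoc]
    exact mul_le_mul_of_nonneg_left hsum (by positivity)
  have hfinal : S / ε ^ 2 ≤ (η₂ + 2 * η₁) / (|1 + 2 * c| * ε ^ 2) := by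
    rw [div_le_div_iff₀ (by positivity) (by positivity)]
    nlinarith [habs, sq_nonneg ε]
  exact hind.trans hfinal
end
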